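/- arXiv:2306.05734 — 4 statements merged into one kernel-verified Lean document; each statement's English description precedes it below -/
import Mathlib

section
/- Let Λ be a nonempty finite set with N elements, Y a countable set, 0 < c ≤ C, and α ∈ (1,∞). For each λ ∈ Λ let M_λ and M'_λ be probability mass functions on Y. Then, with sums and powers computed in the extended nonnegative reals [0,∞], Σ_{y∈Y} P⁺(y)^α · P'⁻(y)^{1−α} ≤ (C/c)^α · max_{λ∈Λ} Σ_{y∈Y} M_λ(y)^α · M'_λ(y)^{1−α}; equivalently, (1/(α−1))·log Σ_{y∈Y} P⁺(y)^α P'⁻(y)^{1−α} ≤ (α/(α−1))·log(C/c) + max_{λ∈Λ} D_α(M_λ‖M'_λ). -/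
open scoped ENNReal BigOperators

/-- KL divergence (order-1 Rényi divergence) between two pmfs, valued in `EReal`. -/
noncomputable def klDiv' {Y : Type*} (p q : Y → ℝ≥0∞) : EReal :=
  open scoped Classical in
  if (∀ y, q y = 0 → p y = 0) ∧
      Summable (fun y => (p y).toReal * Real.log ((p y).toReal / (q y).toReal)) then
    ((∑' y, (p y).toReal * Real.log ((p y).toReal / (q y).toReal) : ℝ) : EReal)
  else ⊤

/-- Rényi divergence of order `α` between two pmfs on a countable set, valued in `EReal`. -/
noncomputable def renyiDiv {Y : Type*} (α : ℝ) (p q : Y → ℝ≥0∞) : EReal :=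
  open scoped Classical in
  if α = 1 then klDiv' p q
  else (((α - 1)⁻¹ : ℝ) : EReal) * ENNReal.log (∑' y, p y ^ α * q y ^ (1 - α))

/-- The set `S_{C,c}` of probability vectors on `Λ` with entries in `[c/N, C/N]`. -/
def densitySet (Λ : Type*) [Fintype Λ] (c C : ℝ) : Set (Λ → ℝ≥0∞) :=
  {π | (∀ l : Λ, ENNReal.ofReal (c / Fintype.card Λ) ≤ π l ∧
      π l ≤ ENNReal.ofReal (C / Fintype.card Λ)) ∧ ∑ l : Λ, π l = 1}

/-- `P⁺(y) = sup_{π ∈ S_{C,c}} Σ_λ π(λ) M_λ(y)`. -/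
noncomputable def Pplus {Λ Y : Type*} [Fintype Λ] (c C : ℝ)
    (M : Λ → Y → ℝ≥0∞) (y : Y) : ℝ≥0∞ :=
  ⨆ π ∈ densitySet Λ c C, ∑ l : Λ, π l * M l y

/-- `P⁻(y) = inf_{π ∈ S_{C,c}} Σ_λ π(λ) M_λ(y)`. -/
noncomputable def Pminus {Λ Y : Type*} [Fintype Λ] (c C : ℝ)
    (M : Λ → Y → ℝ≥0∞) (y : Y) : ℝ≥0∞ :=
  ⨅ π ∈ densitySet Λ c C, ∑ l : Λ, π l * M l y

lemma mulRpowAux {x : ℝ≥0∞} (hx0 : x ≠ 0) (hxt : x ≠ ⊤) (y : ℝ≥0∞) (z : ℝ) :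
    (x * y) ^ z = x ^ z * y ^ z := by
  rw [ENNReal.mul_rpow_eq_ite]; simp [hx0, hxt]

lemma rpowAnti {x y : ℝ≥0∞} {z : ℝ} (hz : z ≤ 0) (h : x ≤ y) : y ^ z ≤ x ^ z := by
  have h2 : x ^ (-z) ≤ y ^ (-z) := ENNReal.rpow_le_rpow h (neg_nonneg.mpr hz)
  rw [← neg_neg z, ENNReal.rpow_neg x, ENNReal.rpow_neg y]
  exact ENNReal.inv_le_inv.mpr h2

lemma erealDistrib {a x : ℝ} (ha : 0 < a) (z : EReal) :
    (a : EReal) * ((x : EReal) + z) = ((a * x : ℝ) : EReal) + (a : EReal) * z := by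
  induction z using EReal.rec with
  | bot =>
      rw [EReal.add_bot, EReal.mul_bot_of_pos (by exact_mod_cast ha), EReal.add_bot]
  | coe z =>
      rw [← EReal.coe_add, ← EReal.coe_mul, ← EReal.coe_mul, ← EReal.coe_add, mul_add]
  | top =>
      rw [EReal.coe_add_top, EReal.mul_top_of_pos (by exact_mod_cast ha), EReal.coe_add_top]

lemma jensen2 {Λ : Type*} [Fintype Λ] {α : ℝ} (hα : 1 < α) (w a b : Λ → ℝ≥0∞)
    (hwt : ∀ l, w l ≠ ⊤) (ha : ∀ l, a l ≠ ⊤) (hb : ∀ l, b l ≠ ⊤) :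
    (∑ l : Λ, w l * a l) ^ α * (∑ l : Λ, w l * b l) ^ (1 - α) ≤
      ∑ l : Λ, w l * (a l ^ α * b l ^ (1 - α)) := by
  have hα0 : (0:ℝ) < α := by linarith
  by_cases hcrit : ∃ l, w l ≠ 0 ∧ b l = 0 ∧ a l ≠ 0
  · obtain ⟨l, hwl, hbl, hal⟩ := hcrit
    have hane : a l ^ α ≠ 0 := by
      simp [ENNReal.rpow_eq_zero_iff, hα0, hal, hα0.le]
    have hterm : w l * (a l ^ α * b l ^ (1 - α)) = ⊤ := by
      rw [hbl, ENNReal.zero_rpow_of_neg (by linarith), ENNReal.mul_top hane,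
        ENNReal.mul_top hwl]
    refine le_of_le_of_eq le_top ?_
    exact (ENNReal.sum_eq_top.mpr ⟨l, Finset.mem_univ l, hterm⟩).symm
  · push_neg at hcrit
    set T := ∑ l : Λ, w l * b l with hTdef
    have hTt : T ≠ ⊤ := by
      refine ENNReal.sum_ne_top.mpr fun l _ => ?_
      exact ENNReal.mul_ne_top (hwt l) (hb l)
    by_cases hT : T = 0
    · have hwb : ∀ l : Λ, w l * b l = 0 := by
        intro l
        exact (Finset.sum_eq_zero_iff.mp hT) l (Finset.mem_univ l)
      have ha0 : ∑ l : Λ, w l * a l = 0 := by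
        refine Finset.sum_eq_zero fun l _ => ?_
        rcases eq_or_ne (w l) 0 with h | h
        · simp [h]
        · have hb0 : b l = 0 := by
            rcases mul_eq_zero.mp (hwb l) with h' | h'
            · exact absurd h' h
            · exact h'
          rw [hcrit l h hb0, mul_zero]
      rw [ha0, ENNReal.zero_rpow_of_pos hα0, zero_mul]
      exact zero_le
    · set z : Λ → ℝ≥0∞ := fun l => a l / b l with hzdef
      have key1 : ∀ l, w l * b l * z l = w l * a l := by
        intro l
        rcases eq_or_ne (b l) 0 with hb0 | hb0
        · rcases eq_or_ne (w l) 0 with hw0 | hw0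
          · simp [hw0]
          · simp [hb0, hcrit l hw0 hb0]
        · rw [mul_assoc]
          congr 1
          exact ENNReal.mul_div_cancel hb0 (hb l)
      have key2 : ∀ l, w l * b l * z l ^ α = w l * (a l ^ α * b l ^ (1 - α)) := by
        intro l
        rcases eq_or_ne (b l) 0 with hb0 | hb0
        · rcases eq_or_ne (w l) 0 with hw0 | hw0
          · simp [hw0]
          · have ha0 : a l = 0 := hcrit l hw0 hb0
            simp [hb0, ha0, hzdef, ENNReal.zero_rpow_of_pos hα0]
        · have hzα : z l ^ α = a l ^ α / b l ^ α :=
            ENNReal.div_rpow_of_nonneg _ _ (le_of_lt hα0)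
          rw [hzα, ENNReal.rpow_sub 1 α hb0 (hb l),
            ENNReal.rpow_one, div_eq_mul_inv, div_eq_mul_inv]
          ring
      have hv : ∑ l : Λ, w l * b l * T⁻¹ = 1 := by
        rw [← Finset.sum_mul, ← hTdef, ENNReal.mul_inv_cancel hT hTt]
      have hJ := ENNReal.rpow_arith_mean_le_arith_mean_rpow Finset.univ
        (fun l => w l * b l * T⁻¹) z hv (le_of_lt hα)
      have e1 : ∑ l : Λ, w l * b l * T⁻¹ * z l = (∑ l : Λ, w l * a l) * T⁻¹ :=
        calc ∑ l : Λ, w l * b l * T⁻¹ * z l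
            = ∑ l : Λ, w l * a l * T⁻¹ :=
              Finset.sum_congr rfl fun l _ => by rw [mul_right_comm, key1 l]
          _ = (∑ l : Λ, w l * a l) * T⁻¹ := (Finset.sum_mul _ _ _).symm
      have e2 : ∑ l : Λ, w l * b l * T⁻¹ * z l ^ α
          = (∑ l : Λ, w l * (a l ^ α * b l ^ (1 - α))) * T⁻¹ :=
        calc ∑ l : Λ, w l * b l * T⁻¹ * z l ^ α
            = ∑ l : Λ, w l * (a l ^ α * b l ^ (1 - α)) * T⁻¹ :=
              Finset.sum_congr rfl fun l _ => by rw [mul_right_comm, key2 l]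
          _ = (∑ l : Λ, w l * (a l ^ α * b l ^ (1 - α))) * T⁻¹ := (Finset.sum_mul _ _ _).symm
      rw [e1, e2] at hJ
      have hAt : (∑ l : Λ, w l * a l) ≠ ⊤ :=
        ENNReal.sum_ne_top.mpr fun l _ => ENNReal.mul_ne_top (hwt l) (ha l)
      have hTpow : T ^ (1 - α) = T * (T ^ α)⁻¹ := by
        rw [ENNReal.rpow_sub 1 α hT hTt, ENNReal.rpow_one, div_eq_mul_inv]
      have hmulrpow : ((∑ l : Λ, w l * a l) * T⁻¹) ^ α
          = (∑ l : Λ, w l * a l) ^ α * (T ^ α)⁻¹ := by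
        rw [ENNReal.mul_rpow_of_ne_top hAt (ENNReal.inv_ne_top.mpr hT), ENNReal.inv_rpow]
      rw [hmulrpow] at hJ
      calc (∑ l : Λ, w l * a l) ^ α * T ^ (1 - α)
          = (∑ l : Λ, w l * a l) ^ α * (T ^ α)⁻¹ * T := by rw [hTpow]; ring
        _ ≤ (∑ l : Λ, w l * (a l ^ α * b l ^ (1 - α))) * T⁻¹ * T :=
            mul_le_mul_left hJ T
        _ = ∑ l : Λ, w l * (a l ^ α * b l ^ (1 - α)) := by
            rw [mul_assoc, ENNReal.inv_mul_cancel hT hTt, mul_one]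

/-- **Bounding the Rényi divergence between `P⁺` and `P'⁻`:**
`Σ_y P⁺(y)^α P'⁻(y)^{1-α} ≤ (C/c)^α · max_λ Σ_y M_λ(y)^α M'_λ(y)^{1-α}`; equivalently,
`(1/(α-1)) log Σ_y P⁺(y)^α P'⁻(y)^{1-α} ≤ (α/(α-1)) log(C/c) + max_λ D_α(M_λ‖M'_λ)`. -/
theorem renyiDiv_Pplus_Pminus_le {Λ Y : Type*} [Fintype Λ] [Nonempty Λ] [Countable Y]
    (α c C : ℝ) (hα : 1 < α) (hc : 0 < c) (hcC : c ≤ C)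
    (M M' : Λ → Y → ℝ≥0∞)
    (hM : ∀ l : Λ, ∑' y : Y, M l y = 1) (hM' : ∀ l : Λ, ∑' y : Y, M' l y = 1) :
    (∑' y : Y, Pplus c C M y ^ α * Pminus c C M' y ^ (1 - α)) ≤
      ENNReal.ofReal (C / c) ^ α * ⨆ l : Λ, ∑' y : Y, M l y ^ α * M' l y ^ (1 - α)
    ∧ (((α - 1)⁻¹ : ℝ) : EReal) *
        ENNReal.log (∑' y : Y, Pplus c C M y ^ α * Pminus c C M' y ^ (1 - α)) ≤
      ((α / (α - 1) * Real.log (C / c) : ℝ) : EReal)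
        + ⨆ l : Λ, renyiDiv α (M l) (M' l) := by
  have hα0 : (0:ℝ) < α := by linarith
  have hαne : α ≠ 1 := ne_of_gt hα
  have h1α : (1:ℝ) - α ≤ 0 := by linarith
  have hainv : (0:ℝ) < (α - 1)⁻¹ := inv_pos.mpr (by linarith)
  have hNpos : 0 < Fintype.card Λ := Fintype.card_pos
  have hN0 : ((Fintype.card Λ : ℕ) : ℝ≥0∞) ≠ 0 := by exact_mod_cast hNpos.ne'
  have hNt : ((Fintype.card Λ : ℕ) : ℝ≥0∞) ≠ ⊤ := ENNReal.natCast_ne_top _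
  have hNR : (0:ℝ) < (Fintype.card Λ : ℝ) := by exact_mod_cast hNpos
  by_cases hc1 : c ≤ 1
  swap
  · -- densitySet is empty
    have hemp : densitySet Λ c C = ∅ := by
      ext π
      simp only [Set.mem_empty_iff_false, iff_false]
      intro hπ
      obtain ⟨hbd, hsum⟩ := hπ
      have heq : ((Fintype.card Λ : ℕ) : ℝ≥0∞) * ENNReal.ofReal (c / Fintype.card Λ)
          = ENNReal.ofReal c := by
        rw [← ENNReal.ofReal_natCast, ← ENNReal.ofReal_mul (by positivity)]
        congr 1
        field_simp
      have hle : ENNReal.ofReal c ≤ 1 := by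
        rw [← heq]
        calc ((Fintype.card Λ : ℕ) : ℝ≥0∞) * ENNReal.ofReal (c / Fintype.card Λ)
            = ∑ _l : Λ, ENNReal.ofReal (c / Fintype.card Λ) := by
              rw [Finset.sum_const, Finset.card_univ, nsmul_eq_mul]
          _ ≤ ∑ l : Λ, π l := Finset.sum_le_sum fun l _ => (hbd l).1
          _ = 1 := hsum
      rw [ENNReal.ofReal_le_one] at hle
      exact hc1 hle
    have hP0 : ∀ y : Y, Pplus c C M y = 0 := by
      intro y
      simp [Pplus, hemp]
    have hL : (∑' y : Y, Pplus c C M y ^ α * Pminus c C M' y ^ (1 - α)) = 0 := by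
      simp [hP0, ENNReal.zero_rpow_of_pos hα0]
    constructor
    · rw [hL]; exact zero_le
    · rw [hL, ENNReal.log_zero, EReal.mul_bot_of_pos (by exact_mod_cast hainv)]
      exact bot_le
  · set w : ℝ≥0∞ := ((Fintype.card Λ : ℕ) : ℝ≥0∞)⁻¹ with hwdef
    have hwt : w ≠ ⊤ := ENNReal.inv_ne_top.mpr hN0
    have hwsum : ∑ _l : Λ, w = 1 := by
      rw [Finset.sum_const, Finset.card_univ, nsmul_eq_mul, hwdef,
        ENNReal.mul_inv_cancel hN0 hNt]
    have hMt : ∀ l y, M l y ≠ ⊤ := by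
      intro l y
      have h := ENNReal.le_tsum (f := fun y => M l y) y
      rw [hM l] at h
      exact ne_top_of_le_ne_top ENNReal.one_ne_top h
    have hM't : ∀ l y, M' l y ≠ ⊤ := by
      intro l y
      have h := ENNReal.le_tsum (f := fun y => M' l y) y
      rw [hM' l] at h
      exact ne_top_of_le_ne_top ENNReal.one_ne_top h
    have hofC0 : ENNReal.ofReal C ≠ 0 := ne_of_gt (ENNReal.ofReal_pos.mpr (lt_of_lt_of_le hc hcC))
    have hofc0 : ENNReal.ofReal c ≠ 0 := ne_of_gt (ENNReal.ofReal_pos.mpr hc)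
    have hCN : ENNReal.ofReal (C / Fintype.card Λ) = ENNReal.ofReal C * w := by
      rw [ENNReal.ofReal_div_of_pos hNR, hwdef, div_eq_mul_inv, ENNReal.ofReal_natCast]
    have hcN : ENNReal.ofReal (c / Fintype.card Λ) = ENNReal.ofReal c * w := by
      rw [ENNReal.ofReal_div_of_pos hNR, hwdef, div_eq_mul_inv, ENNReal.ofReal_natCast]
    have stepA : ∀ y, Pplus c C M y ≤ ENNReal.ofReal C * ∑ l : Λ, w * M l y := by
      intro y
      unfold Pplus
      refine iSup₂_le fun π hπ => ?_
      calc ∑ l : Λ, π l * M l y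
          ≤ ∑ l : Λ, ENNReal.ofReal C * w * M l y :=
            Finset.sum_le_sum fun l _ => mul_le_mul_left (hCN ▸ (hπ.1 l).2) _
        _ = ENNReal.ofReal C * ∑ l : Λ, w * M l y := by
            rw [Finset.mul_sum]
            exact Finset.sum_congr rfl fun l _ => mul_assoc _ _ _
    have stepB : ∀ y, ENNReal.ofReal c * ∑ l : Λ, w * M' l y ≤ Pminus c C M' y := by
      intro y
      unfold Pminus
      refine le_iInf₂ fun π hπ => ?_
      calc ENNReal.ofReal c * ∑ l : Λ, w * M' l y
          = ∑ l : Λ, ENNReal.ofReal c * w * M' l y := by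
            rw [Finset.mul_sum]
            exact Finset.sum_congr rfl fun l _ => (mul_assoc _ _ _).symm
        _ ≤ ∑ l : Λ, π l * M' l y :=
            Finset.sum_le_sum fun l _ => mul_le_mul_left (hcN ▸ (hπ.1 l).1) _
    have stepC : ∀ y, Pplus c C M y ^ α * Pminus c C M' y ^ (1 - α) ≤
        (ENNReal.ofReal C ^ α * ENNReal.ofReal c ^ (1 - α)) *
          ((∑ l : Λ, w * M l y) ^ α * (∑ l : Λ, w * M' l y) ^ (1 - α)) := by
      intro y
      have h1 : Pplus c C M y ^ α ≤ ENNReal.ofReal C ^ α * (∑ l : Λ, w * M l y) ^ α := by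
        rw [← mulRpowAux hofC0 ENNReal.ofReal_ne_top]
        exact ENNReal.rpow_le_rpow (stepA y) hα0.le
      have h2 : Pminus c C M' y ^ (1 - α) ≤
          ENNReal.ofReal c ^ (1 - α) * (∑ l : Λ, w * M' l y) ^ (1 - α) := by
        rw [← mulRpowAux hofc0 ENNReal.ofReal_ne_top]
        exact rpowAnti h1α (stepB y)
      calc Pplus c C M y ^ α * Pminus c C M' y ^ (1 - α)
          ≤ (ENNReal.ofReal C ^ α * (∑ l : Λ, w * M l y) ^ α) *
              (ENNReal.ofReal c ^ (1 - α) * (∑ l : Λ, w * M' l y) ^ (1 - α)) :=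
            mul_le_mul' h1 h2
        _ = (ENNReal.ofReal C ^ α * ENNReal.ofReal c ^ (1 - α)) *
              ((∑ l : Λ, w * M l y) ^ α * (∑ l : Λ, w * M' l y) ^ (1 - α)) := by ring
    have jensenY : ∀ y, (∑ l : Λ, w * M l y) ^ α * (∑ l : Λ, w * M' l y) ^ (1 - α) ≤
        ∑ l : Λ, w * (M l y ^ α * M' l y ^ (1 - α)) := fun y =>
      jensen2 hα (fun _ => w) (fun l => M l y) (fun l => M' l y)
        (fun _ => hwt) (fun l => hMt l y) (fun l => hM't l y)
    obtain ⟨l₀, hl₀⟩ := Finite.exists_max fun l : Λ => ∑' y : Y, M l y ^ α * M' l y ^ (1 - α)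
    have hsup : (⨆ l : Λ, ∑' y : Y, M l y ^ α * M' l y ^ (1 - α))
        = ∑' y : Y, M l₀ y ^ α * M' l₀ y ^ (1 - α) :=
      le_antisymm (iSup_le hl₀) (le_iSup (fun l : Λ => ∑' y : Y, M l y ^ α * M' l y ^ (1 - α)) l₀)
    have hK : ENNReal.ofReal C ^ α * ENNReal.ofReal c ^ (1 - α) ≤ ENNReal.ofReal (C / c) ^ α := by
      calc ENNReal.ofReal C ^ α * ENNReal.ofReal c ^ (1 - α)
          = ENNReal.ofReal C ^ α * (ENNReal.ofReal c ^ (-α) * ENNReal.ofReal c) := by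
            rw [show (1:ℝ) - α = -α + 1 by ring,
              ENNReal.rpow_add _ _ hofc0 ENNReal.ofReal_ne_top, ENNReal.rpow_one]
        _ ≤ ENNReal.ofReal C ^ α * (ENNReal.ofReal c ^ (-α) * 1) :=
            mul_le_mul_right (mul_le_mul_right (ENNReal.ofReal_le_one.mpr hc1) _) _
        _ = (ENNReal.ofReal C / ENNReal.ofReal c) ^ α := by
            rw [mul_one, ENNReal.div_rpow_of_nonneg _ _ hα0.le, ENNReal.rpow_neg,
              div_eq_mul_inv]
        _ = ENNReal.ofReal (C / c) ^ α := by rw [ENNReal.ofReal_div_of_pos hc]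
    have part1 : (∑' y : Y, Pplus c C M y ^ α * Pminus c C M' y ^ (1 - α)) ≤
        ENNReal.ofReal (C / c) ^ α * ⨆ l : Λ, ∑' y : Y, M l y ^ α * M' l y ^ (1 - α) := by
      calc ∑' y : Y, Pplus c C M y ^ α * Pminus c C M' y ^ (1 - α)
          ≤ ∑' y : Y, (ENNReal.ofReal C ^ α * ENNReal.ofReal c ^ (1 - α)) *
              ((∑ l : Λ, w * M l y) ^ α * (∑ l : Λ, w * M' l y) ^ (1 - α)) :=
            ENNReal.tsum_le_tsum stepC
        _ = (ENNReal.ofReal C ^ α * ENNReal.ofReal c ^ (1 - α)) *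
              ∑' y : Y, (∑ l : Λ, w * M l y) ^ α * (∑ l : Λ, w * M' l y) ^ (1 - α) :=
            ENNReal.tsum_mul_left
        _ ≤ (ENNReal.ofReal C ^ α * ENNReal.ofReal c ^ (1 - α)) *
              ∑' y : Y, ∑ l : Λ, w * (M l y ^ α * M' l y ^ (1 - α)) :=
            mul_le_mul_right (ENNReal.tsum_le_tsum jensenY) _
        _ = (ENNReal.ofReal C ^ α * ENNReal.ofReal c ^ (1 - α)) *
              ∑ l : Λ, w * ∑' y : Y, M l y ^ α * M' l y ^ (1 - α) := by
            rw [Summable.tsum_finsetSum (fun l _ => ENNReal.summable)]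
            congr 1
            exact Finset.sum_congr rfl fun l _ => ENNReal.tsum_mul_left
        _ ≤ (ENNReal.ofReal C ^ α * ENNReal.ofReal c ^ (1 - α)) *
              ∑ l : Λ, w * ∑' y : Y, M l₀ y ^ α * M' l₀ y ^ (1 - α) :=
            mul_le_mul_right (Finset.sum_le_sum fun l _ => mul_le_mul_right (hl₀ l) w) _
        _ = (ENNReal.ofReal C ^ α * ENNReal.ofReal c ^ (1 - α)) *
              ∑' y : Y, M l₀ y ^ α * M' l₀ y ^ (1 - α) := by
            rw [← Finset.sum_mul, hwsum, one_mul]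
        _ ≤ ENNReal.ofReal (C / c) ^ α * ⨆ l : Λ, ∑' y : Y, M l y ^ α * M' l y ^ (1 - α) := by
            rw [hsup]
            exact mul_le_mul_left hK _
    refine ⟨part1, ?_⟩
    have hlog := ENNReal.log_monotone part1
    have hmono := mul_le_mul_of_nonneg_left hlog
      (le_of_lt (show (0:EReal) < (((α - 1)⁻¹ : ℝ) : EReal) from by exact_mod_cast hainv))
    refine le_trans hmono ?_
    rw [ENNReal.log_mul_add, ENNReal.log_rpow, hsup,
      ENNReal.log_ofReal_of_pos (div_pos (lt_of_lt_of_le hc hcC) hc), ← EReal.coe_mul,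
      erealDistrib hainv]
    refine add_le_add ?_ ?_
    · exact le_of_eq (EReal.coe_eq_coe_iff.mpr (by ring))
    · have hrw : (((α - 1)⁻¹ : ℝ) : EReal) *
          ENNReal.log (∑' y : Y, M l₀ y ^ α * M' l₀ y ^ (1 - α))
          = renyiDiv α (M l₀) (M' l₀) := by
        rw [renyiDiv, if_neg hαne]
      rw [hrw]
      exact le_iSup (fun l => renyiDiv α (M l) (M' l)) l₀
end

section
/- Let α ∈ (1,∞), let Λ be a nonempty finite set, let Y be a countable set, let π be a probability vector on Λ, and for each λ ∈ Λ let u_λ, v_λ : Y → [0,∞) with v_λ(y) > 0 for all λ and y. Then, with sums and powers computed in the extended nonnegative reals [0,∞], Σ_{y∈Y} ( Σ_{λ∈Λ} π(λ)·u_λ(y) )^α · ( Σ_{λ∈Λ} π(λ)·v_λ(y) )^{1−α} ≤ max_{λ∈Λ} Σ_{y∈Y} u_λ(y)^α · v_λ(y)^{1−α}. -/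
open scoped ENNReal BigOperators


/-- Pointwise Hölder / joint-convexity step. -/
lemma pointwise_step {Λ : Type*} [Fintype Λ] (α : ℝ) (hα : 1 < α)
    (P U V : Λ → ℝ≥0∞) (hV0 : ∀ l, V l ≠ 0) (hVt : ∀ l, V l ≠ ∞) (hPt : ∀ l, P l ≠ ∞)
    (hB0 : (∑ l, P l * V l) ≠ 0) :
    (∑ l, P l * U l) ^ α * (∑ l, P l * V l) ^ (1 - α) ≤
      ∑ l, P l * (U l ^ α * V l ^ (1 - α)) := by
  have hα0 : (0:ℝ) < α := lt_trans one_pos hα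
  set A := ∑ l, P l * U l with hA
  set B := ∑ l, P l * V l with hB
  set C := ∑ l, P l * (U l ^ α * V l ^ (1 - α)) with hC
  have hBt : B ≠ ∞ := by
    refine (ENNReal.sum_lt_top.2 fun l _ => ?_).ne
    exact ENNReal.mul_lt_top (hPt l).lt_top (hVt l).lt_top
  -- Hölder with weights w l = P l * V l, f l = U l / V l
  have hold := ENNReal.inner_le_weight_mul_Lp_of_nonneg Finset.univ hα.le
      (fun l => P l * V l) (fun l => U l / V l)
  have h1 : ∑ l, (P l * V l) * (U l / V l) = A := by
    refine Finset.sum_congr rfl fun l _ => ?_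
    rw [mul_assoc, mul_comm (V l), ENNReal.div_mul_cancel (hV0 l) (hVt l)]
  have h3 : ∑ l, (P l * V l) * (U l / V l) ^ α = C := by
    refine Finset.sum_congr rfl fun l _ => ?_
    rw [div_eq_mul_inv, ENNReal.mul_rpow_of_nonneg _ _ hα0.le, ENNReal.inv_rpow,
      ← ENNReal.rpow_neg]
    have : V l ^ (1 - α) = V l * V l ^ (-α) := by
      nth_rewrite 2 [← ENNReal.rpow_one (V l)]
      rw [← ENNReal.rpow_add _ _ (hV0 l) (hVt l)]
      ring_nf
    rw [this]; ring
  rw [h1, h3] at hold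
  -- raise Hölder to the power α
  have h4 : A ^ α ≤ B ^ (α - 1) * C := by
    calc A ^ α ≤ (B ^ (1 - α⁻¹) * C ^ α⁻¹) ^ α :=
          ENNReal.rpow_le_rpow hold hα0.le
      _ = B ^ (α - 1) * C := by
          rw [ENNReal.mul_rpow_of_nonneg _ _ hα0.le, ← ENNReal.rpow_mul,
            ← ENNReal.rpow_mul]
          congr 1
          · congr 1; field_simp
          · rw [inv_mul_cancel₀ hα0.ne', ENNReal.rpow_one]
  calc A ^ α * B ^ (1 - α) ≤ (B ^ (α - 1) * C) * B ^ (1 - α) :=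
        mul_le_mul_left h4 _
    _ = C * (B ^ (α - 1) * B ^ (1 - α)) := by ring
    _ = C := by
        rw [← ENNReal.rpow_add _ _ hB0 hBt]
        norm_num

/-- **Quasi-convexity bound for mixtures.** For a probability vector `π` on a nonempty
finite set `Λ`, nonnegative `u_λ : Y → [0,∞)` and positive `v_λ : Y → (0,∞)` on a
countable set `Y`, with sums and real powers computed in `[0,∞]`,
`Σ_y (Σ_λ π(λ) u_λ(y))^α (Σ_λ π(λ) v_λ(y))^{1-α} ≤ max_λ Σ_y u_λ(y)^α v_λ(y)^{1-α}`. -/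
theorem mixture_renyi_sum_le {Λ Y : Type*} [Fintype Λ] [Nonempty Λ] [Countable Y]
    (α : ℝ) (hα : 1 < α)
    (π : Λ → ℝ) (hπ : ∀ l, 0 ≤ π l) (hπ1 : ∑ l, π l = 1)
    (u v : Λ → Y → ℝ) (hu : ∀ l y, 0 ≤ u l y) (hv : ∀ l y, 0 < v l y) :
    (∑' y : Y, (ENNReal.ofReal (∑ l, π l * u l y)) ^ α *
        (ENNReal.ofReal (∑ l, π l * v l y)) ^ (1 - α)) ≤
      ⨆ l : Λ, ∑' y : Y, (ENNReal.ofReal (u l y)) ^ α *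
        (ENNReal.ofReal (v l y)) ^ (1 - α) := by
  set P : Λ → ℝ≥0∞ := fun l => ENNReal.ofReal (π l) with hP
  set U : Y → Λ → ℝ≥0∞ := fun y l => ENNReal.ofReal (u l y) with hU
  set V : Y → Λ → ℝ≥0∞ := fun y l => ENNReal.ofReal (v l y) with hV
  -- some l has positive weight
  obtain ⟨l₀, hl₀⟩ : ∃ l, 0 < π l := by
    by_contra h
    push_neg at h
    have : ∑ l, π l = 0 := Finset.sum_eq_zero fun l _ => le_antisymm (h l) (hπ l)
    rw [hπ1] at this; norm_num at this
  have key : ∀ y : Y,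
      (ENNReal.ofReal (∑ l, π l * u l y)) ^ α *
        (ENNReal.ofReal (∑ l, π l * v l y)) ^ (1 - α) ≤
      ∑ l, P l * (U y l ^ α * V y l ^ (1 - α)) := by
    intro y
    have hAe : ENNReal.ofReal (∑ l, π l * u l y) = ∑ l, P l * U y l := by
      rw [ENNReal.ofReal_sum_of_nonneg fun l _ => mul_nonneg (hπ l) (hu l y)]
      exact Finset.sum_congr rfl fun l _ => ENNReal.ofReal_mul (hπ l)
    have hBe : ENNReal.ofReal (∑ l, π l * v l y) = ∑ l, P l * V y l := by
      rw [ENNReal.ofReal_sum_of_nonneg fun l _ => mul_nonneg (hπ l) (hv l y).le]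
      exact Finset.sum_congr rfl fun l _ => ENNReal.ofReal_mul (hπ l)
    rw [hAe, hBe]
    refine pointwise_step α hα P (U y) (V y)
      (fun l => by simp [hV, ENNReal.ofReal_pos.2 (hv l y), (ENNReal.ofReal_pos.2 (hv l y)).ne'])
      (fun l => ENNReal.ofReal_ne_top) (fun l => ENNReal.ofReal_ne_top) ?_
    intro h
    have := Finset.sum_eq_zero_iff.mp h l₀ (Finset.mem_univ l₀)
    rcases mul_eq_zero.mp this with h' | h'
    · exact (ENNReal.ofReal_pos.2 hl₀).ne' h'
    · exact (ENNReal.ofReal_pos.2 (hv l₀ y)).ne' h'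
  calc (∑' y : Y, (ENNReal.ofReal (∑ l, π l * u l y)) ^ α *
        (ENNReal.ofReal (∑ l, π l * v l y)) ^ (1 - α))
      ≤ ∑' y : Y, ∑ l, P l * (U y l ^ α * V y l ^ (1 - α)) :=
        ENNReal.tsum_le_tsum key
    _ = ∑ l, ∑' y : Y, P l * (U y l ^ α * V y l ^ (1 - α)) :=
        Summable.tsum_finsetSum fun l _ => ENNReal.summable
    _ = ∑ l, P l * ∑' y : Y, (U y l ^ α * V y l ^ (1 - α)) := by
        simp_rw [ENNReal.tsum_mul_left]
    _ ≤ ∑ l, P l * ⨆ l' : Λ, ∑' y : Y, (ENNReal.ofReal (u l' y)) ^ α *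
          (ENNReal.ofReal (v l' y)) ^ (1 - α) :=
        Finset.sum_le_sum fun l _ => mul_le_mul_right (le_iSup (fun l' : Λ =>
          ∑' y : Y, (ENNReal.ofReal (u l' y)) ^ α *
            (ENNReal.ofReal (v l' y)) ^ (1 - α)) l) _
    _ = (∑ l, P l) * ⨆ l' : Λ, ∑' y : Y, (ENNReal.ofReal (u l' y)) ^ α *
          (ENNReal.ofReal (v l' y)) ^ (1 - α) := by
        rw [Finset.sum_mul]
    _ = _ := by
        have : ∑ l, P l = 1 := by
          rw [hP, ← ENNReal.ofReal_sum_of_nonneg fun l _ => hπ l, hπ1,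
            ENNReal.ofReal_one]
        rw [this, one_mul]
end

section
/- Let k be a natural number and let s_1,…,s_k, t_1,…,t_k, S, T be real numbers satisfying: 0 ≤ s_j ≤ t_j, s_j ≤ S, t_j ≤ T, and t_j − s_j ≤ T − S for every j, and 0 ≤ S ≤ T. Then ∏_{j=1}^{k} t_j − ∏_{j=1}^{k} s_j ≤ T^k − S^k. -/
open scoped BigOperators

/-- **Difference of products bounded by difference of powers.** If `0 ≤ s_j ≤ t_j`,
`s_j ≤ S`, `t_j ≤ T`, `t_j - s_j ≤ T - S` for all `j = 1, …, k`, and `0 ≤ S ≤ T`, then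
`∏_{j=1}^k t_j - ∏_{j=1}^k s_j ≤ T^k - S^k`. -/
theorem prod_sub_prod_le_pow_sub_pow (k : ℕ) (s t : ℕ → ℝ) (S T : ℝ)
    (h : ∀ j ∈ Finset.Icc 1 k, 0 ≤ s j ∧ s j ≤ t j ∧ s j ≤ S ∧ t j ≤ T ∧
      t j - s j ≤ T - S)
    (hS : 0 ≤ S) (hST : S ≤ T) :
    (∏ j ∈ Finset.Icc 1 k, t j) - ∏ j ∈ Finset.Icc 1 k, s j ≤ T ^ k - S ^ k := by
  induction k with
  | zero => simp
  | succ k ih =>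
    have hmem : (k+1) ∈ Finset.Icc 1 (k+1) := by
      simp [Nat.succ_le_succ]
    have hsub : ∀ j ∈ Finset.Icc 1 k, j ∈ Finset.Icc 1 (k+1) := by
      intro j hj
      simp only [Finset.mem_Icc] at hj ⊢
      omega
    have h' : ∀ j ∈ Finset.Icc 1 k, 0 ≤ s j ∧ s j ≤ t j ∧ s j ≤ S ∧ t j ≤ T ∧
        t j - s j ≤ T - S := fun j hj => h j (hsub j hj)
    have ih' := ih h'
    have hnotmem : (k+1) ∉ Finset.Icc 1 k := by
      simp
    have hins : Finset.Icc 1 (k+1) = insert (k+1) (Finset.Icc 1 k) := by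
      ext j; simp [Finset.mem_Icc]; omega
    have hsnn : ∀ j ∈ Finset.Icc 1 k, 0 ≤ s j := fun j hj => (h' j hj).1
    have htnn : ∀ j ∈ Finset.Icc 1 k, 0 ≤ t j := fun j hj =>
      le_trans (h' j hj).1 (h' j hj).2.1
    have hPs : 0 ≤ ∏ j ∈ Finset.Icc 1 k, s j := Finset.prod_nonneg hsnn
    have hPt : ∏ j ∈ Finset.Icc 1 k, s j ≤ ∏ j ∈ Finset.Icc 1 k, t j :=
      Finset.prod_le_prod hsnn (fun j hj => (h' j hj).2.1)
    have hPsS : ∏ j ∈ Finset.Icc 1 k, s j ≤ S ^ k := by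
      calc ∏ j ∈ Finset.Icc 1 k, s j ≤ ∏ j ∈ Finset.Icc 1 k, S :=
            Finset.prod_le_prod hsnn (fun j hj => (h' j hj).2.2.1)
        _ = S ^ k := by simp [Nat.card_Icc]
    obtain ⟨h0, h1, h2, h3, h4⟩ := h (k+1) hmem
    rw [hins, Finset.prod_insert hnotmem, Finset.prod_insert hnotmem]
    have key : t (k+1) * ∏ j ∈ Finset.Icc 1 k, t j - s (k+1) * ∏ j ∈ Finset.Icc 1 k, s j
        = t (k+1) * ((∏ j ∈ Finset.Icc 1 k, t j) - ∏ j ∈ Finset.Icc 1 k, s j)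
          + (t (k+1) - s (k+1)) * ∏ j ∈ Finset.Icc 1 k, s j := by ring
    rw [key]
    have ht0 : (0:ℝ) ≤ t (k+1) := le_trans h0 h1
    have hTk : (0:ℝ) ≤ T ^ k - S ^ k := sub_nonneg.2 (pow_le_pow_left₀ hS hST k)
    have b1 : t (k+1) * ((∏ j ∈ Finset.Icc 1 k, t j) - ∏ j ∈ Finset.Icc 1 k, s j)
        ≤ T * (T ^ k - S ^ k) :=
      mul_le_mul h3 ih' (sub_nonneg.2 hPt) (le_trans hS hST)
    have b2 : (t (k+1) - s (k+1)) * ∏ j ∈ Finset.Icc 1 k, s j ≤ (T - S) * S ^ k :=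
      mul_le_mul h4 hPsS hPs (sub_nonneg.2 hST)
    calc _ ≤ T * (T ^ k - S ^ k) + (T - S) * S ^ k := add_le_add b1 b2
      _ = T ^ (k+1) - S ^ (k+1) := by ring
end

section
/- Let (p_k)_{k≥1} be nonnegative reals with Σ_{k≥1} p_k = 1, and let f(x) = Σ_{k≥1} p_k x^k for x ∈ [0,1]. Let (s_j)_{j≥1} and (t_j)_{j≥1} be sequences in [0,1] with s_j ≤ t_j for every j, and let S, T ∈ [0,1]. (a) If for every j one has s_j ≤ S, t_j ≤ T, and t_j − s_j ≤ T − S, and S ≤ T, then Σ_{k≥1} p_k · ( ∏_{j=1}^{k} t_j − ∏_{j=1}^{k} s_j ) ≤ f(T) − f(S). (b) If for every j one has s_j ≥ S, t_j ≥ T, and t_j − s_j ≥ T − S ≥ 0, then Σ_{k≥1} p_k · ( ∏_{j=1}^{k} t_j − ∏_{j=1}^{k} s_j ) ≥ f(T) − f(S). -/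
open scoped BigOperators

private lemma pgf_aux_a (s t : ℕ → ℝ) (S T : ℝ) (hS0 : 0 ≤ S) (hST : S ≤ T)
    (h : ∀ j, 1 ≤ j → 0 ≤ s j ∧ s j ≤ S ∧ s j ≤ t j ∧ t j ≤ T ∧ t j - s j ≤ T - S) :
    ∀ n : ℕ, (∏ j ∈ Finset.Icc 1 n, t j) ≤ T ^ n ∧
      0 ≤ (∏ j ∈ Finset.Icc 1 n, s j) ∧
      (∏ j ∈ Finset.Icc 1 n, s j) ≤ (∏ j ∈ Finset.Icc 1 n, t j) ∧
      (∏ j ∈ Finset.Icc 1 n, t j) - (∏ j ∈ Finset.Icc 1 n, s j) ≤ T ^ n - S ^ n := by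
  intro n
  induction n with
  | zero => simp
  | succ n ih =>
    obtain ⟨hA, hB0, hBA, hdiff⟩ := ih
    obtain ⟨h1, h2, h3, h4, h5⟩ := h (n + 1) (by omega)
    have hTn : S ^ n ≤ T ^ n := pow_le_pow_left₀ hS0 hST n
    have hSn : (0 : ℝ) ≤ S ^ n := pow_nonneg hS0 n
    rw [Finset.prod_Icc_succ_top (by omega : 1 ≤ n + 1),
      Finset.prod_Icc_succ_top (by omega : 1 ≤ n + 1), pow_succ, pow_succ]
    refine ⟨by nlinarith, mul_nonneg hB0 h1, ?_, by nlinarith⟩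
    exact mul_le_mul hBA h3 h1 (by linarith)

private lemma pgf_aux_b (s t : ℕ → ℝ) (S T : ℝ) (hS0 : 0 ≤ S) (hST : S ≤ T)
    (h : ∀ j, 1 ≤ j → S ≤ s j ∧ T ≤ t j ∧ T - S ≤ t j - s j) :
    ∀ n : ℕ, T ^ n ≤ (∏ j ∈ Finset.Icc 1 n, t j) ∧
      S ^ n ≤ (∏ j ∈ Finset.Icc 1 n, s j) ∧
      T ^ n - S ^ n ≤ (∏ j ∈ Finset.Icc 1 n, t j) - (∏ j ∈ Finset.Icc 1 n, s j) := by
  intro n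
  induction n with
  | zero => simp
  | succ n ih =>
    obtain ⟨hA, hB, hdiff⟩ := ih
    obtain ⟨h1, h2, h3⟩ := h (n + 1) (by omega)
    have hTn : S ^ n ≤ T ^ n := pow_le_pow_left₀ hS0 hST n
    have hSn : (0 : ℝ) ≤ S ^ n := pow_nonneg hS0 n
    have hTn0 : (0 : ℝ) ≤ T ^ n := pow_nonneg (le_trans hS0 hST) n
    rw [Finset.prod_Icc_succ_top (by omega : 1 ≤ n + 1),
      Finset.prod_Icc_succ_top (by omega : 1 ≤ n + 1), pow_succ, pow_succ]
    refine ⟨by nlinarith, by nlinarith, by nlinarith⟩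

/-- **Comparing the stopped difference of products with the probability generating
function.** Let `f` be the pgf of a probability distribution `(p_k)_{k ≥ 1}` on the
positive integers, and let `(s_j)_{j≥1}, (t_j)_{j≥1}` be sequences in `[0,1]` with
`s_j ≤ t_j`, and `S, T ∈ [0,1]`.
(a) If `s_j ≤ S`, `t_j ≤ T`, `t_j - s_j ≤ T - S` for all `j ≥ 1` and `S ≤ T`, then
`Σ_k p_k (∏_{j≤k} t_j - ∏_{j≤k} s_j) ≤ f(T) - f(S)`.
(b) If `s_j ≥ S`, `t_j ≥ T`, `t_j - s_j ≥ T - S ≥ 0` for all `j ≥ 1`, then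
`Σ_k p_k (∏_{j≤k} t_j - ∏_{j≤k} s_j) ≥ f(T) - f(S)`. -/
theorem pgf_sandwich (p : ℕ → ℝ) (hp : ∀ k, 1 ≤ k → 0 ≤ p k)
    (hpsum : ∑' k : ℕ, p (k + 1) = 1)
    (f : ℝ → ℝ) (hf : ∀ x : ℝ, f x = ∑' k : ℕ, p (k + 1) * x ^ (k + 1))
    (s t : ℕ → ℝ)
    (hs : ∀ j, 1 ≤ j → s j ∈ Set.Icc (0 : ℝ) 1)
    (ht : ∀ j, 1 ≤ j → t j ∈ Set.Icc (0 : ℝ) 1)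
    (hst : ∀ j, 1 ≤ j → s j ≤ t j)
    (S T : ℝ) (hS : S ∈ Set.Icc (0 : ℝ) 1) (hT : T ∈ Set.Icc (0 : ℝ) 1) :
    ((∀ j, 1 ≤ j → s j ≤ S ∧ t j ≤ T ∧ t j - s j ≤ T - S) → S ≤ T →
      (∑' k : ℕ, p (k + 1) *
          ((∏ j ∈ Finset.Icc 1 (k + 1), t j) - ∏ j ∈ Finset.Icc 1 (k + 1), s j)) ≤
        f T - f S)
    ∧ ((∀ j, 1 ≤ j → S ≤ s j ∧ T ≤ t j ∧ T - S ≤ t j - s j) → 0 ≤ T - S →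
      f T - f S ≤
        ∑' k : ℕ, p (k + 1) *
          ((∏ j ∈ Finset.Icc 1 (k + 1), t j) - ∏ j ∈ Finset.Icc 1 (k + 1), s j)) := by
  have hp' : ∀ k : ℕ, 0 ≤ p (k + 1) := fun k => hp (k + 1) (by omega)
  have hsummp : Summable (fun k : ℕ => p (k + 1)) := by
    by_contra h
    rw [tsum_eq_zero_of_not_summable h] at hpsum
    linarith
  have hpow : ∀ x : ℝ, x ∈ Set.Icc (0 : ℝ) 1 →
      Summable (fun k : ℕ => p (k + 1) * x ^ (k + 1)) := by
    intro x hx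
    refine hsummp.of_nonneg_of_le
      (fun k => mul_nonneg (hp' k) (pow_nonneg hx.1 _)) (fun k => ?_)
    calc p (k + 1) * x ^ (k + 1) ≤ p (k + 1) * 1 :=
          mul_le_mul_of_nonneg_left (pow_le_one₀ hx.1 hx.2) (hp' k)
      _ = p (k + 1) := mul_one _
  -- bounds on the products
  have hprods : ∀ k : ℕ,
      0 ≤ (∏ j ∈ Finset.Icc 1 (k + 1), t j) - ∏ j ∈ Finset.Icc 1 (k + 1), s j ∧
      (∏ j ∈ Finset.Icc 1 (k + 1), t j) - ∏ j ∈ Finset.Icc 1 (k + 1), s j ≤ 1 := by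
    intro k
    have hs0 : ∀ j ∈ Finset.Icc 1 (k + 1), 0 ≤ s j := fun j hj =>
      (hs j (Finset.mem_Icc.mp hj).1).1
    have hle : ∀ j ∈ Finset.Icc 1 (k + 1), s j ≤ t j := fun j hj =>
      hst j (Finset.mem_Icc.mp hj).1
    have h1 : (∏ j ∈ Finset.Icc 1 (k + 1), s j) ≤ ∏ j ∈ Finset.Icc 1 (k + 1), t j :=
      Finset.prod_le_prod hs0 hle
    have h2 : (∏ j ∈ Finset.Icc 1 (k + 1), t j) ≤ 1 :=
      Finset.prod_le_one (fun j hj => le_trans (hs0 j hj) (hle j hj))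
        (fun j hj => (ht j (Finset.mem_Icc.mp hj).1).2)
    have h3 : 0 ≤ ∏ j ∈ Finset.Icc 1 (k + 1), s j := Finset.prod_nonneg hs0
    exact ⟨by linarith, by linarith⟩
  have hdiffsumm : Summable (fun k : ℕ => p (k + 1) *
      ((∏ j ∈ Finset.Icc 1 (k + 1), t j) - ∏ j ∈ Finset.Icc 1 (k + 1), s j)) := by
    refine hsummp.of_nonneg_of_le
      (fun k => mul_nonneg (hp' k) (hprods k).1) (fun k => ?_)
    calc p (k + 1) * ((∏ j ∈ Finset.Icc 1 (k + 1), t j) -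
            ∏ j ∈ Finset.Icc 1 (k + 1), s j) ≤ p (k + 1) * 1 :=
          mul_le_mul_of_nonneg_left (hprods k).2 (hp' k)
      _ = p (k + 1) := mul_one _
  have hsub : f T - f S = ∑' k : ℕ, p (k + 1) * (T ^ (k + 1) - S ^ (k + 1)) := by
    rw [hf T, hf S, ← Summable.tsum_sub (hpow T hT) (hpow S hS)]
    exact tsum_congr fun k => by ring
  have hTSsumm : Summable (fun k : ℕ => p (k + 1) * (T ^ (k + 1) - S ^ (k + 1))) := by
    simpa [mul_sub] using (hpow T hT).sub (hpow S hS)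
  constructor
  · intro ha haST
    have aux := pgf_aux_a s t S T hS.1 haST
      (fun j hj => ⟨(hs j hj).1, (ha j hj).1, hst j hj, (ha j hj).2.1, (ha j hj).2.2⟩)
    rw [hsub]
    refine Summable.tsum_le_tsum (fun k => ?_) hdiffsumm hTSsumm
    exact mul_le_mul_of_nonneg_left (aux (k + 1)).2.2.2 (hp' k)
  · intro hb hbTS
    have aux := pgf_aux_b s t S T hS.1 (by linarith) hb
    rw [hsub]
    refine Summable.tsum_le_tsum (fun k => ?_) hTSsumm hdiffsumm
    exact mul_le_mul_of_nonneg_left (aux (k + 1)).2.2 (hp' k)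
end
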